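/- arXiv:1403.2147 — 4 statements merged into one kernel-verified Lean document; each statement's English description precedes it below -/
import Mathlib

section
/- For integers $n \geq 3$ and positive reals $t, \beta$, define $F(n,t,\beta) = (n^3-2n^2-4n+8)t^{2n-2} + (n^3+2n^2)\beta^{2n-2} + (4n^2-2n)t^{n-1}\beta^{n-1} - n(n+1)^2 t^n \beta^{n-2} - (n+1)(5n^2-11n+8)t^{n-2}\beta^n$. Then with $A = 2(n+1)\Omega^n[n c_1^2\Omega^{n-2} - (n+2)c_2\Omega^{n-2}] - n^2(c_1\Omega^{n-1})^2$ computed from the formulas $\Omega^n = \frac{t^n - \beta^n}{n-1}$, $c_1\Omega^{n-1} = \frac{(2n-1)t^{n-1}-\beta^{n-1}}{n-1}$, $c_1^2\Omega^{n-2} = \frac{(2n-1)^2 t^{n-2}-\beta^{n-2}}{n-1}$, $c_2\Omega^{n-2} = \frac{n}{2}[3t^{n-2}+\beta^{n-2}]$, one has the polynomial identity $\frac{(n-1)^2}{n} A = F(n,t,\beta)$. -/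
theorem stmt_6 (n : ℕ) (hn : 3 ≤ n) (t β : ℝ) (ht : 0 < t) (hβ : 0 < β)
    (Ωn c1Ω c1sqΩ c2Ω A : ℝ)
    (hΩn : Ωn = (t ^ n - β ^ n) / (n - 1))
    (hc1Ω : c1Ω = ((2 * n - 1) * t ^ (n - 1) - β ^ (n - 1)) / (n - 1))
    (hc1sqΩ : c1sqΩ = ((2 * n - 1) ^ 2 * t ^ (n - 2) - β ^ (n - 2)) / (n - 1))
    (hc2Ω : c2Ω = (n / 2) * (3 * t ^ (n - 2) + β ^ (n - 2)))
    (hA : A = 2 * (n + 1) * Ωn * (n * c1sqΩ - (n + 2) * c2Ω) - n ^ 2 * c1Ω ^ 2) :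
    ((n : ℝ) - 1) ^ 2 / n * A =
      (n ^ 3 - 2 * n ^ 2 - 4 * n + 8) * t ^ (2 * n - 2)
      + (n ^ 3 + 2 * n ^ 2) * β ^ (2 * n - 2)
      + (4 * n ^ 2 - 2 * n) * t ^ (n - 1) * β ^ (n - 1)
      - n * (n + 1) ^ 2 * t ^ n * β ^ (n - 2)
      - (n + 1) * (5 * n ^ 2 - 11 * n + 8) * t ^ (n - 2) * β ^ n := by
  obtain ⟨m, rfl⟩ : ∃ m, n = m + 3 := ⟨n - 3, by omega⟩
  subst hΩn hc1Ω hc1sqΩ hc2Ω hA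
  have h1 : m + 3 - 1 = m + 2 := by omega
  have h2 : m + 3 - 2 = m + 1 := by omega
  have h3 : 2 * (m + 3) - 2 = m + (m + 4) := by omega
  rw [h1, h2, h3]
  have hm : (0:ℝ) ≤ m := Nat.cast_nonneg m
  have hne : ((m : ℝ) + 3) - 1 ≠ 0 := by intro h; linarith
  have hn0 : ((m : ℝ) + 3) ≠ 0 := by intro h; linarith
  push_cast
  simp only [pow_add]
  field_simp
  ring
end

section
/- For all real numbers $\alpha, \beta > 0$, there exists a positive integer $N$ such that for all $n \geq N$ (with $t = (n-1)\alpha + \beta$): $(n^3-2n^2-4n+8)t^{2n-2} + (n^3+2n^2)\beta^{2n-2} + (4n^2-2n)t^{n-1}\beta^{n-1} > n(n+1)^2 t^n\beta^{n-2} + (n+1)(5n^2-11n+8)t^{n-2}\beta^n$. -/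
theorem stmt_8 (α β : ℝ) (hα : 0 < α) (hβ : 0 < β) :
    ∃ N : ℕ, 0 < N ∧ ∀ n : ℕ, N ≤ n →
      ((n : ℝ) ^ 3 - 2 * n ^ 2 - 4 * n + 8) * ((n - 1) * α + β) ^ (2 * n - 2)
      + (n ^ 3 + 2 * n ^ 2) * β ^ (2 * n - 2)
      + (4 * n ^ 2 - 2 * n) * ((n - 1) * α + β) ^ (n - 1) * β ^ (n - 1)
      > n * (n + 1) ^ 2 * ((n - 1) * α + β) ^ n * β ^ (n - 2)
        + (n + 1) * (5 * n ^ 2 - 11 * n + 8) * ((n - 1) * α + β) ^ (n - 2) * β ^ n := by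
  refine ⟨10 + ⌈β / α⌉₊, by positivity, ?_⟩
  intro n hn
  set t : ℝ := ((n : ℝ) - 1) * α + β with ht
  have hn10 : (10 : ℕ) ≤ n := le_trans (by omega) hn
  have hnr : (10 : ℝ) ≤ (n : ℝ) := by exact_mod_cast hn10
  set x : ℝ := (n : ℝ) with hx
  have hxpos : 0 < x := by linarith
  have hx3 : 0 < x ^ 3 := by positivity
  have hA : x ^ 3 / 2 ≤ x ^ 3 - 2 * x ^ 2 - 4 * x + 8 := by nlinarith
  have hApos : 0 < x ^ 3 - 2 * x ^ 2 - 4 * x + 8 := by nlinarith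
  have hC : x * (x + 1) ^ 2 + (x + 1) * (5 * x ^ 2 - 11 * x + 8) ≤ 14 * x ^ 3 := by
    nlinarith
  have h11 : 0 ≤ (x + 1) * (5 * x ^ 2 - 11 * x + 8) := by nlinarith
  have h13 : 0 ≤ 4 * x ^ 2 - 2 * x := by nlinarith
  -- t ≥ 2β
  have htβ : 2 * β ≤ t := by
    have h1 : β / α ≤ x - 1 := by
      have h2 : (⌈β / α⌉₊ + 1 : ℕ) ≤ n := by omega
      have h3 : ((⌈β / α⌉₊ + 1 : ℕ) : ℝ) ≤ (n : ℝ) := by exact_mod_cast h2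
      have h4 : (β / α : ℝ) ≤ (⌈β / α⌉₊ : ℝ) := Nat.le_ceil _
      push_cast at h3
      linarith
    have h5 : β ≤ (x - 1) * α := by
      rw [div_le_iff₀ hα] at h1; linarith
    simp only [ht]; linarith
  have hβt : β ≤ t := by linarith
  have htpos : 0 < t := by linarith
  -- exponent rewriting
  have e1 : 2 * n - 2 = n + (n - 2) := by omega
  have e2 : n = (n - 2) + 2 := by omega
  have e3 : n - 1 = (n - 2) + 1 := by omega
  have hP : 0 < t ^ n * β ^ (n - 2) := by positivity
  -- main lower bound for t ^ (2n-2)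
  have hmain : 2 ^ (n - 2) * (t ^ n * β ^ (n - 2)) ≤ t ^ (2 * n - 2) := by
    rw [e1, pow_add]
    have h6 : (2 * β) ^ (n - 2) ≤ t ^ (n - 2) :=
      pow_le_pow_left₀ (by linarith) htβ _
    rw [mul_pow] at h6
    calc 2 ^ (n - 2) * (t ^ n * β ^ (n - 2))
        = t ^ n * (2 ^ (n - 2) * β ^ (n - 2)) := by ring
      _ ≤ t ^ n * t ^ (n - 2) := by
          exact mul_le_mul_of_nonneg_left h6 (by positivity)
  -- bound the second RHS term
  have hterm2 : t ^ (n - 2) * β ^ n ≤ t ^ n * β ^ (n - 2) := by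
    conv_lhs => rw [e2]
    conv_rhs => rw [e2]
    have : β ^ 2 ≤ t ^ 2 := pow_le_pow_left₀ hβ.le hβt 2
    calc t ^ (n - 2) * β ^ ((n - 2) + 2) = (t ^ (n - 2) * β ^ (n - 2)) * β ^ 2 := by
          rw [pow_add]; ring
      _ ≤ (t ^ (n - 2) * β ^ (n - 2)) * t ^ 2 := by
          exact mul_le_mul_of_nonneg_left this (by positivity)
      _ = t ^ ((n - 2) + 2) * β ^ (n - 2) := by rw [pow_add]; ring
  have h2pow : (256 : ℝ) ≤ 2 ^ (n - 2) := by
    calc (256 : ℝ) = 2 ^ 8 := by norm_num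
      _ ≤ 2 ^ (n - 2) := pow_le_pow_right₀ one_le_two (by omega)
  have hcoef : 14 * x ^ 3 < (x ^ 3 - 2 * x ^ 2 - 4 * x + 8) * 2 ^ (n - 2) := by
    have h7 : (x ^ 3 / 2) * 256 ≤ (x ^ 3 - 2 * x ^ 2 - 4 * x + 8) * 2 ^ (n - 2) :=
      mul_le_mul hA h2pow (by norm_num) hApos.le
    nlinarith [h7, hx3]
  -- combine
  have hlhs : (x ^ 3 - 2 * x ^ 2 - 4 * x + 8) * (2 ^ (n - 2) * (t ^ n * β ^ (n - 2)))
      ≤ (x ^ 3 - 2 * x ^ 2 - 4 * x + 8) * t ^ (2 * n - 2)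
      + (x ^ 3 + 2 * x ^ 2) * β ^ (2 * n - 2)
      + (4 * x ^ 2 - 2 * x) * t ^ (n - 1) * β ^ (n - 1) := by
    have h8 : (x ^ 3 - 2 * x ^ 2 - 4 * x + 8) * (2 ^ (n - 2) * (t ^ n * β ^ (n - 2)))
        ≤ (x ^ 3 - 2 * x ^ 2 - 4 * x + 8) * t ^ (2 * n - 2) :=
      mul_le_mul_of_nonneg_left hmain hApos.le
    have h9 : 0 ≤ (x ^ 3 + 2 * x ^ 2) * β ^ (2 * n - 2) := by positivity
    have h10 : 0 ≤ (4 * x ^ 2 - 2 * x) * t ^ (n - 1) * β ^ (n - 1) := by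
      positivity
    linarith
  have hrhs : x * (x + 1) ^ 2 * t ^ n * β ^ (n - 2)
      + (x + 1) * (5 * x ^ 2 - 11 * x + 8) * t ^ (n - 2) * β ^ n
      ≤ (x * (x + 1) ^ 2 + (x + 1) * (5 * x ^ 2 - 11 * x + 8)) * (t ^ n * β ^ (n - 2)) := by
    have h12 : (x + 1) * (5 * x ^ 2 - 11 * x + 8) * (t ^ (n - 2) * β ^ n)
        ≤ (x + 1) * (5 * x ^ 2 - 11 * x + 8) * (t ^ n * β ^ (n - 2)) :=
      mul_le_mul_of_nonneg_left hterm2 h11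
    linarith
  have hmid : (x * (x + 1) ^ 2 + (x + 1) * (5 * x ^ 2 - 11 * x + 8)) * (t ^ n * β ^ (n - 2))
      < (x ^ 3 - 2 * x ^ 2 - 4 * x + 8) * (2 ^ (n - 2) * (t ^ n * β ^ (n - 2))) := by
    have := mul_lt_mul_of_pos_right (lt_of_le_of_lt hC hcoef) hP
    calc (x * (x + 1) ^ 2 + (x + 1) * (5 * x ^ 2 - 11 * x + 8)) * (t ^ n * β ^ (n - 2))
        < ((x ^ 3 - 2 * x ^ 2 - 4 * x + 8) * 2 ^ (n - 2)) * (t ^ n * β ^ (n - 2)) := this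
      _ = (x ^ 3 - 2 * x ^ 2 - 4 * x + 8) * (2 ^ (n - 2) * (t ^ n * β ^ (n - 2))) := by ring
  linarith
end

section
/- Let $n \geq 2$ and let $\tilde{r} = (\tilde{r}_{i\bar{j}})$ be an $n \times n$ complex Hermitian matrix with trace zero. Define the tensor $P_{i\bar{j}k\bar{l}} = \frac{1}{n+2}(\delta_{ij}\tilde{r}_{k\bar{l}} + \delta_{kl}\tilde{r}_{i\bar{j}} + \delta_{il}\tilde{r}_{k\bar{j}} + \delta_{kj}\tilde{r}_{i\bar{l}})$. Then $\sum_{i,j,k,l} P_{i\bar{j}k\bar{l}} P_{j\bar{i}l\bar{k}} = \frac{4}{n+2}\sum_{i,j}\tilde{r}_{i\bar{j}}\tilde{r}_{j\bar{i}}$, i.e., $|P|^2 = \frac{4}{n+2}|\tilde{r}|^2$. -/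
open Finset

theorem stmt_10 (n : ℕ) (hn : 2 ≤ n) (r : Matrix (Fin n) (Fin n) ℂ)
    (hherm : r.IsHermitian) (htr : r.trace = 0)
    (P : Fin n → Fin n → Fin n → Fin n → ℂ)
    (hP : ∀ i j k l, P i j k l = (1 / ((n : ℂ) + 2)) *
      ((if i = j then 1 else 0) * r k l + (if k = l then 1 else 0) * r i j
        + (if i = l then 1 else 0) * r k j + (if k = j then 1 else 0) * r i l)) :
    ∑ i, ∑ j, ∑ k, ∑ l, P i j k l * P j i l k =
      (4 / ((n : ℂ) + 2)) * ∑ i, ∑ j, r i j * r j i := by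
  have htr' : ∑ i, r i i = 0 := by simpa [Matrix.trace, Matrix.diag] using htr
  have hc : ((n:ℂ)+2) ≠ 0 := by
    have h : ((n + 2 : ℕ) : ℂ) ≠ 0 := Nat.cast_ne_zero.mpr (by omega)
    push_cast at h; exact h
  have hc2 : ∀ a b : ℂ, 1/((n:ℂ)+2) * a * (1/((n:ℂ)+2) * b) = (1/((n:ℂ)+2))^2 * (a*b) := by
    intro a b; ring
  have h1 : ∑ x : Fin n, ∑ y : Fin n, r x x * r y y = 0 := by
    simp [← Finset.mul_sum, htr']
  have h2 : ∑ i : Fin n, r i i * ∑ j : Fin n, r j j = 0 := by simp [htr']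
  have h3 : ∑ x : Fin n, ∑ y : Fin n, r x y * (r y x * (n:ℂ))
      = (n:ℂ) * ∑ x : Fin n, ∑ y : Fin n, r x y * r y x := by
    simp only [show ∀ a b : ℂ, a * (b * (n:ℂ)) = (n:ℂ) * (a*b) from fun a b => by ring,
      ← Finset.mul_sum]
  simp only [hP]
  simp only [mul_add, add_mul, mul_ite, ite_mul, mul_one, one_mul, mul_zero, zero_mul,
    Finset.sum_add_distrib, Finset.sum_ite_eq, Finset.sum_ite_eq', Finset.mem_univ, if_true,
    Finset.mul_sum, Finset.sum_ite_irrel, Finset.sum_const_zero]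
  simp only [hc2, ← Finset.mul_sum, htr', mul_zero, Finset.mul_sum]
  simp only [← Finset.mul_sum, Finset.sum_const, Finset.card_univ, Fintype.card_fin,
    nsmul_eq_mul]
  simp only [mul_comm]
  rw [h1, h2, h3]
  field_simp
  ring
end

section
/- For all sufficiently large integers $n$, $\frac{(2n-1)^n-1}{n-1} > (n+1)^n$. -/
lemma aux_32pow : ∀ n : ℕ, 5 ≤ n → (n : ℝ) ≤ (3/2) ^ n := by
  intro n hn
  induction n, hn using Nat.le_induction with
  | base => norm_num
  | succ k hk ih =>
    have hk' : (5:ℝ) ≤ k := by exact_mod_cast hk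
    push_cast
    calc (k:ℝ) + 1 ≤ (3/2) * k := by linarith
    _ ≤ (3/2) * (3/2)^k := by nlinarith
    _ = (3/2)^(k+1) := by ring

theorem stmt_15 :
    ∃ N : ℕ, ∀ n : ℕ, N ≤ n →
      ((2 * (n : ℝ) - 1) ^ n - 1) / ((n : ℝ) - 1) > ((n : ℝ) + 1) ^ n := by
  use 5
  intro n hn
  have hn' : (5:ℝ) ≤ n := by exact_mod_cast hn
  have h1 : (0:ℝ) < (n:ℝ) - 1 := by linarith
  rw [gt_iff_lt, lt_div_iff₀ h1]
  have h32 : (n:ℝ) ≤ (3/2)^n := aux_32pow n hn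
  have hbase : (3/2) * ((n:ℝ)+1) ≤ 2*(n:ℝ) - 1 := by linarith
  have hpos : (0:ℝ) ≤ (3/2) * ((n:ℝ)+1) := by linarith
  have h2 : ((3/2) * ((n:ℝ)+1))^n ≤ (2*(n:ℝ)-1)^n := pow_le_pow_left₀ hpos hbase n
  have h4 : (n:ℝ) * ((n:ℝ)+1)^n ≤ (2*(n:ℝ)-1)^n := by
    calc (n:ℝ) * ((n:ℝ)+1)^n ≤ (3/2)^n * ((n:ℝ)+1)^n := by
          apply mul_le_mul_of_nonneg_right h32 (by positivity)
    _ = ((3/2) * ((n:ℝ)+1))^n := by rw [mul_pow]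
    _ ≤ (2*(n:ℝ)-1)^n := h2
  have h5 : (1:ℝ) < ((n:ℝ)+1)^n := by
    apply one_lt_pow₀ (by linarith) (by omega)
  nlinarith [h4, h5]
end
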